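/- arXiv:2006.09547 — 5 statements merged into one kernel-verified Lean document; each statement's English description precedes it below -/
import Mathlib

section
/- Let S = k[x,y,z,t,u,v,w] be a polynomial ring over a field k, let F = x^2 + u*y^2 + 2*v*y*z + w*z^2 + (u*w - v^2)*t^2, and let Ξ be the 4×4 matrix over S with rows (-vt, y, z, t), (-uy-2vz, vt, -ut, z), (-wz, wt, -vt, -y), (-uwt, -wz, uy+2vz, vt). Set Φ = x·I₄ - Ξ and Ψ = x·I₄ + Ξ. Then Φ·Ψ = Ψ·Φ = F·I₄. -/
open MvPolynomial Matrix

noncomputable section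

variable {k : Type*} [Field k]

/-- The variables x,y,z,t,u,v,w of the polynomial ring S = k[x,y,z,t,u,v,w]. -/
abbrev S (k : Type*) [Field k] := MvPolynomial (Fin 7) k

def x : S k := X 0
def y : S k := X 1
def z : S k := X 2
def t : S k := X 3
def u : S k := X 4
def v : S k := X 5
def w : S k := X 6

/-- The Curto–Morrison polynomial F. -/
def F : S k := x^2 + u*y^2 + 2*v*y*z + w*z^2 + (u*w - v^2)*t^2

/-- The matrix Ξ of the matrix factorization. -/
def Xi : Matrix (Fin 4) (Fin 4) (S k) :=
  !![-(v*t), y, z, t;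
     -(u*y) - 2*v*z, v*t, -(u*t), z;
     -(w*z), w*t, -(v*t), -y;
     -(u*w*t), -(w*z), u*y + 2*v*z, v*t]

def Phi : Matrix (Fin 4) (Fin 4) (S k) := (x : S k) • (1 : Matrix (Fin 4) (Fin 4) (S k)) - Xi
def Psi : Matrix (Fin 4) (Fin 4) (S k) := (x : S k) • (1 : Matrix (Fin 4) (Fin 4) (S k)) + Xi

/-
Ξ squares to the scalar matrix (x² - F)·I₄, that is, Ξ² = -Q·I₄ where Q = F - x² is the quadratic form in y, z, t
over k[u, v, w]. Since x·I₄ is central, (x·I₄ ∓ Ξ)(x·I₄ ± Ξ) = x²·I₄ - Ξ² = F·I₄.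
-/

theorem Commute.sub_mul_add_eq_and_add_mul_sub_eq {α : Type*} [Ring α] {a b c : α}
    (hab : Commute a b) (hb : b * b = a * a - c) :
    (a - b) * (a + b) = c ∧ (a + b) * (a - b) = c := by
  constructor
  · rw [← hab.mul_self_sub_mul_self_eq', hb, sub_sub_cancel]
  · rw [← hab.mul_self_sub_mul_self_eq, hb, sub_sub_cancel]

theorem Xi_mul_self : (Xi : Matrix (Fin 4) (Fin 4) (S k)) * Xi = ((x : S k) ^ 2 - F) • 1 := by
  ext i j : 1
  fin_cases i <;> fin_cases j <;>
    simp [Xi, F, Matrix.mul_apply, Fin.sum_univ_four] <;> ring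

theorem matrix_factorization :
    (Phi : Matrix (Fin 4) (Fin 4) (S k)) * Psi = (F : S k) • (1 : Matrix (Fin 4) (Fin 4) (S k)) ∧
    (Psi : Matrix (Fin 4) (Fin 4) (S k)) * Phi = (F : S k) • (1 : Matrix (Fin 4) (Fin 4) (S k)) := by
  have hcomm : Commute ((x : S k) • (1 : Matrix (Fin 4) (Fin 4) (S k))) Xi :=
    (Commute.one_left Xi).smul_left x
  refine hcomm.sub_mul_add_eq_and_add_mul_sub_eq ?_
  rw [Xi_mul_self, sub_smul, smul_mul_smul_comm, one_mul, sq]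

end
end

section
/- The quotient algebra k⟨a,b⟩/(ab+ba, a²+b²+b³) is finite dimensional over k (indeed 9-dimensional as a k-vector space). -/
noncomputable section

variable {k : Type*} [Field k] [CharZero k]

def Fa (k : Type*) [Field k] : FreeAlgebra k (Fin 2) := FreeAlgebra.ι k 0
def Fb (k : Type*) [Field k] : FreeAlgebra k (Fin 2) := FreeAlgebra.ι k 1

/-- Relations ab+ba = 0 and a²+b²+b³ = 0. -/
inductive Rel7 (k : Type*) [Field k] :
    FreeAlgebra k (Fin 2) → FreeAlgebra k (Fin 2) → Prop
  | anticomm : Rel7 k (Fa k * Fb k + Fb k * Fa k) 0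
  | equation : Rel7 k (Fa k ^ 2 + Fb k ^ 2 + Fb k ^ 3) 0

/-!
Using the relations, together with `2 ≠ 0` to get `b³a = 0`, left multiplication by `a` and by
`b` maps the span of the nine monomials `1, a, b, a², ab, b², a³, a²b, a⁴` into itself; since this
span contains `1`, it is the whole algebra. The integer matrices of these two left multiplications
satisfy the relations themselves, so they define a representation of the algebra on `k⁹` in
which the `i`-th monomial sends the first basis vector to the `i`-th one. Hence the nine
monomials are linearly independent.
-/

theorem Submodule.span_eq_top_of_mul_mem_span {R A : Type*} [CommSemiring R] [Semiring A]
    [Algebra R A] {s t : Set A} (hs : Algebra.adjoin R s = ⊤) (ht : 1 ∈ span R t)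
    (hmul : ∀ x ∈ s, ∀ y ∈ t, x * y ∈ span R t) : span R t = ⊤ := by
  have hmul' (x : A) (hx : x ∈ s) : span R t ≤ (span R t).comap (LinearMap.mulLeft R x) :=
    span_le.2 (hmul x hx)
  refine eq_top_iff'.2 fun z => ?_
  have hz : z ∈ Algebra.adjoin R s := hs ▸ Algebra.mem_top
  suffices ∀ y ∈ span R t, z * y ∈ span R t by simpa using this 1 ht
  induction hz using Algebra.adjoin_induction with
  | mem x hx => exact hmul' x hx
  | algebraMap r => exact fun y hy => by simpa [Algebra.smul_def] using smul_mem _ r hy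
  | add x x' _ _ hx hx' => exact fun y hy => by simpa [add_mul] using add_mem (hx y hy) (hx' y hy)
  | mul x x' _ _ hx hx' => exact fun y hy => by simpa [mul_assoc] using hx _ (hx' y hy)

structure SatisfiesRel7 {R : Type*} [Ring R] (a b : R) : Prop where
  anticomm : a * b + b * a = 0
  equation : a ^ 2 + b ^ 2 + b ^ 3 = 0

theorem SatisfiesRel7.map {R S F : Type*} [Ring R] [Ring S] [FunLike F R S] [RingHomClass F R S]
    (f : F) {a b : R} (h : SatisfiesRel7 a b) : SatisfiesRel7 (f a) (f b) where
  anticomm := by simpa using congrArg f h.anticomm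
  equation := by simpa using congrArg f h.equation

def normalMonomials {R : Type*} [Monoid R] (a b : R) : Fin 9 → R :=
  ![1, a, b, a ^ 2, a * b, b ^ 2, a ^ 3, a ^ 2 * b, a ^ 4]

theorem map_normalMonomials {R S F : Type*} [Monoid R] [Monoid S] [FunLike F R S]
    [MonoidHomClass F R S] (f : F) (a b : R) (i : Fin 9) :
    f (normalMonomials a b i) = normalMonomials (f a) (f b) i := by
  fin_cases i <;> simp [normalMonomials]

/-- Column `i` holds the coordinates of `a * normalMonomials a b i` in the normal monomials;
likewise for `b` in `leftMulMatrixB`. -/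
def leftMulMatrixA : Matrix (Fin 9) (Fin 9) ℤ :=
  !![0,0,0,0,0,0,0,0,0;
     1,0,0,0,0,0,0,0,0;
     0,0,0,0,0,0,0,0,0;
     0,1,0,0,0,0,0,0,0;
     0,0,1,0,0,0,0,0,0;
     0,0,0,0,0,0,0,0,0;
     0,0,0,1,0,-1,0,0,0;
     0,0,0,0,1,0,0,0,0;
     0,0,0,0,0,0,1,0,0]

def leftMulMatrixB : Matrix (Fin 9) (Fin 9) ℤ :=
  !![0,0,0,0,0,0,0,0,0;
     0,0,0,0,0,0,0,0,0;
     1,0,0,0,0,0,0,0,0;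
     0,0,0,0,0,-1,0,0,0;
     0,-1,0,0,0,0,0,0,0;
     0,0,1,0,0,-1,0,0,0;
     0,0,0,0,1,0,0,0,0;
     0,0,0,1,0,0,0,0,0;
     0,0,0,0,0,0,0,-1,0]

theorem satisfiesRel7_leftMulMatrix : SatisfiesRel7 leftMulMatrixA leftMulMatrixB :=
  ⟨by decide, by decide⟩

theorem normalMonomials_leftMulMatrix_apply_zero :
    ∀ i j, normalMonomials leftMulMatrixA leftMulMatrixB i j 0 =
      (1 : Matrix (Fin 9) (Fin 9) ℤ) j i := by
  decide

namespace SatisfiesRel7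

variable {R : Type*} [Ring R] {a b : R}

theorem mul_sq_comm (h : SatisfiesRel7 a b) : a * b ^ 2 = b ^ 2 * a := by
  linear_combination (norm := noncomm_ring) h.anticomm * b - b * h.anticomm

theorem mul_pow_three (h : SatisfiesRel7 a b) : a * b ^ 3 = -(b ^ 3 * a) := by
  linear_combination (norm := noncomm_ring)
    h.anticomm * b ^ 2 - b * h.anticomm * b + b ^ 2 * h.anticomm

/-- `a` commutes with `a² = -b² - b³` and with `b²` but anticommutes with `b³`,
so `2 b³a = 0`. -/
theorem pow_three_mul_eq_zero [IsAddTorsionFree R] (h : SatisfiesRel7 a b) : b ^ 3 * a = 0 :=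
  self_eq_neg.1 <| by
    linear_combination (norm := noncomm_ring)
      h.mul_sq_comm + h.mul_pow_three - (a * h.equation - h.equation * a)

theorem pow_three_eq_neg_sq_mul [IsAddTorsionFree R] (h : SatisfiesRel7 a b) :
    a ^ 3 = -(b ^ 2 * a) := by
  linear_combination (norm := noncomm_ring)
    a * h.equation - h.mul_sq_comm - h.mul_pow_three + h.pow_three_mul_eq_zero

theorem a_mul_normalMonomials [IsAddTorsionFree R] (h : SatisfiesRel7 a b) (i : Fin 9) :
    a * normalMonomials a b i = ∑ j, leftMulMatrixA j i • normalMonomials a b j := by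
  fin_cases i <;>
    simp only [normalMonomials, leftMulMatrixA, Matrix.of_apply, Matrix.cons_val_zero,
      Matrix.cons_val_succ, Matrix.cons_val, Matrix.cons_val_fin_one, Fin.reduceFinMk,
      Fin.sum_univ_succ, Fin.sum_univ_zero, zero_zsmul, one_zsmul, neg_zsmul, add_zero, zero_add,
      mul_one, ← mul_assoc, ← pow_two, ← pow_succ', Nat.reduceAdd]
  · show a * b ^ 2 = -a ^ 3
    linear_combination (norm := noncomm_ring) h.mul_sq_comm + h.pow_three_eq_neg_sq_mul
  · show a ^ 3 * b = 0
    linear_combination (norm := noncomm_ring)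
      h.pow_three_eq_neg_sq_mul * b - b ^ 2 * h.anticomm + h.pow_three_mul_eq_zero
  · show a ^ 5 = 0
    linear_combination (norm := noncomm_ring)
      a ^ 2 * h.pow_three_eq_neg_sq_mul - h.equation * (b ^ 2 * a)
        + b * h.pow_three_mul_eq_zero + b ^ 2 * h.pow_three_mul_eq_zero

theorem b_mul_normalMonomials [IsAddTorsionFree R] (h : SatisfiesRel7 a b) (i : Fin 9) :
    b * normalMonomials a b i = ∑ j, leftMulMatrixB j i • normalMonomials a b j := by
  fin_cases i <;>
    simp only [normalMonomials, leftMulMatrixB, Matrix.of_apply, Matrix.cons_val_zero,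
      Matrix.cons_val_succ, Matrix.cons_val, Matrix.cons_val_fin_one, Fin.reduceFinMk,
      Fin.sum_univ_succ, Fin.sum_univ_zero, zero_zsmul, one_zsmul, neg_zsmul, add_zero, zero_add,
      mul_one, ← mul_assoc, ← pow_two, ← pow_succ', Nat.reduceAdd]
  · show b * a = -(a * b)
    linear_combination (norm := noncomm_ring) h.anticomm
  · show b * a ^ 2 = a ^ 2 * b
    linear_combination (norm := noncomm_ring) h.anticomm * a - a * h.anticomm
  · show b * a * b = a ^ 3
    linear_combination (norm := noncomm_ring) b * h.anticomm - h.pow_three_eq_neg_sq_mul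
  · show b ^ 3 = -a ^ 2 + -b ^ 2
    linear_combination (norm := noncomm_ring) h.equation
  · show b * a ^ 3 = 0
    linear_combination (norm := noncomm_ring)
      b * h.pow_three_eq_neg_sq_mul - h.pow_three_mul_eq_zero
  · show b * a ^ 2 * b = -a ^ 4
    linear_combination (norm := noncomm_ring)
      (h.anticomm * a - a * h.anticomm) * b + h.equation * b ^ 2 - b ^ 2 * h.equation
        + a * h.pow_three_eq_neg_sq_mul - h.mul_sq_comm * a
  · show b * a ^ 4 = 0
    linear_combination (norm := noncomm_ring)
      b * h.pow_three_eq_neg_sq_mul * a - h.pow_three_mul_eq_zero * a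

end SatisfiesRel7

def Qa (k : Type*) [Field k] : RingQuot (Rel7 k) := RingQuot.mkAlgHom k (Rel7 k) (Fa k)
def Qb (k : Type*) [Field k] : RingQuot (Rel7 k) := RingQuot.mkAlgHom k (Rel7 k) (Fb k)

theorem satisfiesRel7_Qa_Qb {k : Type*} [Field k] : SatisfiesRel7 (Qa k) (Qb k) where
  anticomm := by simpa [Qa, Qb] using RingQuot.mkAlgHom_rel k (Rel7.anticomm (k := k))
  equation := by simpa [Qa, Qb] using RingQuot.mkAlgHom_rel k (Rel7.equation (k := k))

theorem adjoin_Qa_Qb {k : Type*} [Field k] : Algebra.adjoin k {Qa k, Qb k} = ⊤ := by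
  have : {Qa k, Qb k} = RingQuot.mkAlgHom k (Rel7 k) '' Set.range (FreeAlgebra.ι k) := by
    ext x; simp [Fin.exists_fin_two, Qa, Qb, Fa, Fb, eq_comm]
  rw [this, Algebra.adjoin_image, FreeAlgebra.adjoin_range_ι, Algebra.map_top,
    AlgHom.range_eq_top]
  exact RingQuot.mkAlgHom_surjective k _

def liftRel7 {k : Type*} [Field k] {A : Type*} [Ring A] [Algebra k A] {a b : A}
    (h : SatisfiesRel7 a b) : RingQuot (Rel7 k) →ₐ[k] A :=
  RingQuot.liftAlgHom k ⟨FreeAlgebra.lift k ![a, b], fun _ _ hr => by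
    cases hr <;> simp [Fa, Fb, h.anticomm, h.equation]⟩

theorem liftRel7_Qa {k : Type*} [Field k] {A : Type*} [Ring A] [Algebra k A] {a b : A}
    (h : SatisfiesRel7 a b) : liftRel7 h (Qa k) = a := by
  simp [liftRel7, Qa, Fa]

theorem liftRel7_Qb {k : Type*} [Field k] {A : Type*} [Ring A] [Algebra k A] {a b : A}
    (h : SatisfiesRel7 a b) : liftRel7 h (Qb k) = b := by
  simp [liftRel7, Qb, Fb]

def leftRegularRep (k : Type*) [Field k] : RingQuot (Rel7 k) →ₐ[k] Matrix (Fin 9) (Fin 9) k :=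
  liftRel7 (satisfiesRel7_leftMulMatrix.map (Int.castRingHom k).mapMatrix)

theorem leftRegularRep_normalMonomials {k : Type*} [Field k] (i : Fin 9) :
    leftRegularRep k (normalMonomials (Qa k) (Qb k) i) =
      (Int.castRingHom k).mapMatrix (normalMonomials leftMulMatrixA leftMulMatrixB i) := by
  rw [map_normalMonomials, map_normalMonomials, leftRegularRep, liftRel7_Qa, liftRel7_Qb]

theorem linearIndependent_normalMonomials_Qa_Qb {k : Type*} [Field k] :
    LinearIndependent k (normalMonomials (Qa k) (Qb k)) := by
  let firstColumn : Matrix (Fin 9) (Fin 9) k →ₗ[k] (Fin 9 → k) :=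
    LinearMap.proj 0 ∘ₗ (Matrix.transposeLinearEquiv (Fin 9) (Fin 9) k k).toLinearMap
  refine LinearIndependent.of_comp (firstColumn ∘ₗ (leftRegularRep k).toLinearMap) ?_
  suffices (firstColumn ∘ₗ (leftRegularRep k).toLinearMap) ∘ normalMonomials (Qa k) (Qb k) =
      Pi.basisFun k (Fin 9) by
    rw [this]; exact (Pi.basisFun k (Fin 9)).linearIndependent
  ext i j
  change leftRegularRep k (normalMonomials (Qa k) (Qb k) i) j 0 = Pi.basisFun k (Fin 9) i j
  rw [leftRegularRep_normalMonomials, RingHom.mapMatrix_apply, Matrix.map_apply,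
    normalMonomials_leftMulMatrix_apply_zero]
  simp [Matrix.one_apply, Pi.single_apply, eq_comm]

theorem span_normalMonomials_Qa_Qb {k : Type*} [Field k] [CharZero k] :
    Submodule.span k (Set.range (normalMonomials (Qa k) (Qb k))) = ⊤ := by
  have := IsAddTorsionFree.of_isTorsionFree k (RingQuot (Rel7 k))
  have hmem (c : Fin 9 → ℤ) : ∑ j, c j • normalMonomials (Qa k) (Qb k) j ∈
      Submodule.span k (Set.range (normalMonomials (Qa k) (Qb k))) :=
    Submodule.sum_mem _ fun j _ => zsmul_mem (Submodule.subset_span (Set.mem_range_self j)) _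
  refine Submodule.span_eq_top_of_mul_mem_span adjoin_Qa_Qb
    (Submodule.subset_span (Set.mem_range_self 0)) ?_
  rintro x (rfl | rfl) _ ⟨i, rfl⟩
  · rw [satisfiesRel7_Qa_Qb.a_mul_normalMonomials]; exact hmem _
  · rw [satisfiesRel7_Qa_Qb.b_mul_normalMonomials]; exact hmem _

def normalBasis (k : Type*) [Field k] [CharZero k] : Module.Basis (Fin 9) k (RingQuot (Rel7 k)) :=
  .mk linearIndependent_normalMonomials_Qa_Qb span_normalMonomials_Qa_Qb.ge

/-- The algebra k⟨a,b⟩/(ab+ba, a²+b²+b³) is finite dimensional, of dimension 9. -/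
theorem finite_dimensional_quotient :
    FiniteDimensional k (RingQuot (Rel7 k)) ∧
    Module.finrank k (RingQuot (Rel7 k)) = 9 :=
  ⟨Module.Finite.of_basis (normalBasis k),
    by rw [Module.finrank_eq_card_basis (normalBasis k), Fintype.card_fin]⟩
end
end

section
/- The quotient algebra B = k⟨a,b⟩/(ab+ba, a²+b²) is infinite dimensional over k; in fact the images of the powers aⁿ for n ≥ 0 are linearly independent in B. -/
/-! Sending `a ↦ diag(X, -X)` and `b ↦ [[0, X], [-X, 0]]` (`X` times two anticommuting matrices
with squares `1` and `-1`) defines a representation of `B` on `2 × 2` matrices over `k[X]`. The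
top-left entry of the image of `aⁿ` is `Xⁿ`, so the powers of `a` are linearly independent. -/

noncomputable section

variable {k : Type*} [Field k] [CharZero k]

/-- Relations ab+ba = 0 and a²+b² = 0. -/
inductive Rel8 (k : Type*) [Field k] :
    FreeAlgebra k (Fin 2) → FreeAlgebra k (Fin 2) → Prop
  | anticomm : Rel8 k (Fa k * Fb k + Fb k * Fa k) 0
  | equation : Rel8 k (Fa k ^ 2 + Fb k ^ 2) 0

open Polynomial Matrix

section Matrices

variable {R : Type*} [CommRing R] (x : R)

def anticommA : Matrix (Fin 2) (Fin 2) R := diagonal ![x, -x]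

def anticommB : Matrix (Fin 2) (Fin 2) R := !![0, x; -x, 0]

theorem anticommA_mul_anticommB_add :
    anticommA x * anticommB x + anticommB x * anticommA x = 0 := by
  rw [eta_fin_two 0]
  simp [anticommA, anticommB, diagonal_fin_two]

theorem anticommA_sq_add_anticommB_sq : anticommA x ^ 2 + anticommB x ^ 2 = 0 := by
  rw [eta_fin_two 0]
  simp [anticommA, anticommB, diagonal_fin_two, sq]

theorem anticommA_pow_apply_zero_zero (n : ℕ) : (anticommA x ^ n) 0 0 = x ^ n := by
  simp [anticommA, diagonal_pow]

end Matrices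

section Representation

omit [CharZero k]

variable (k) in
def Rel8.toMatrix : RingQuot (Rel8 k) →ₐ[k] Matrix (Fin 2) (Fin 2) k[X] :=
  RingQuot.liftAlgHom k ⟨FreeAlgebra.lift k ![anticommA X, anticommB X], by
    rintro _ _ (_ | _)
    · simpa [Fa, Fb] using anticommA_mul_anticommB_add (X : k[X])
    · simpa [Fa, Fb] using anticommA_sq_add_anticommB_sq (X : k[X])⟩

theorem Rel8.toMatrix_mk_Fa :
    Rel8.toMatrix k (RingQuot.mkAlgHom k (Rel8 k) (Fa k)) = anticommA X := by
  simp [Rel8.toMatrix, Fa]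

theorem linearIndependent_X_pow : LinearIndependent k fun n : ℕ => (X : k[X]) ^ n := by
  simpa [coe_basisMonomials, monomial_one_right_eq_X_pow] using
    (basisMonomials k).linearIndependent

theorem linearIndependent_pow_mk_Fa :
    LinearIndependent k fun n : ℕ => RingQuot.mkAlgHom k (Rel8 k) (Fa k) ^ n := by
  refine LinearIndependent.of_comp
    (entryLinearMap k k[X] 0 0 ∘ₗ (Rel8.toMatrix k).toLinearMap) ?_
  convert linearIndependent_X_pow (k := k) with n
  simp [Rel8.toMatrix_mk_Fa, anticommA_pow_apply_zero_zero]

end Representation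

/-- B = k⟨a,b⟩/(ab+ba, a²+b²) is infinite dimensional: the powers aⁿ are linearly
independent over k. -/
theorem infinite_dimensional_quotient :
    (LinearIndependent k fun n : ℕ =>
      (RingQuot.mkAlgHom k (Rel8 k) (Fa k)) ^ n) ∧
    ¬ FiniteDimensional k (RingQuot (Rel8 k)) :=
  ⟨linearIndependent_pow_mk_Fa, fun _ =>
    Module.Finite.not_linearIndependent_of_infinite _ (linearIndependent_pow_mk_Fa (k := k))⟩

end
end

section
/- The algebra A₀ = k⟨a,b⟩/(ab+ba, a²+b^{2n+1}) is graded by assigning weights wt(a) = 2n+1, wt(b) = 2, and the 6n+3 monomials a^s b^t for 0 ≤ s ≤ 2, 0 ≤ t ≤ 2n form a k-linear basis of A₀; in particular dim_k A₀ = 6n+3. -/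
/-!
Anticommutation gives `b^t a^s = (-1)^(st) a^s b^t`, and `a³ = 0` because
`a · a² = -a b^(2n+1)` while `a² · a = -b^(2n+1) a = a b^(2n+1)`, and `2` is invertible.
Replacing `b^(2n+1)` by `-a²` lowers the exponent of `b` without changing the weight, so
every `a^s b^t` is `0` or `±` a monomial with `s ≤ 2`, `t ≤ 2n` of the same weight: these
monomials span, and the spans of the monomials of each weight multiply as a grading. They
are independent because the explicit operators `a e_{s,t} = e_{s+1,t}`,
`b e_{s,t} = (-1)^s e_{s,t+1}`, `b e_{0,2n} = -e_{2,0}` (all other basis vectors going to `0`)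
satisfy the relations of `A₀`, and `a^s b^t` sends `e_{0,0}` to `e_{s,t}`.
-/

noncomputable section

variable {k : Type*} [Field k] [CharZero k]

/-- Relations ab+ba = 0 and a²+b^{2n+1} = 0, defining A₀. -/
inductive A0Rel (k : Type*) [Field k] (n : ℕ) :
    FreeAlgebra k (Fin 2) → FreeAlgebra k (Fin 2) → Prop
  | anticomm : A0Rel k n (Fa k * Fb k + Fb k * Fa k) 0
  | equation : A0Rel k n (Fa k ^ 2 + Fb k ^ (2*n+1)) 0

abbrev A0 (k : Type*) [Field k] (n : ℕ) := RingQuot (A0Rel k n)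

def qa (k : Type*) [Field k] (n : ℕ) : A0 k n := RingQuot.mkAlgHom k (A0Rel k n) (Fa k)
def qb (k : Type*) [Field k] (n : ℕ) : A0 k n := RingQuot.mkAlgHom k (A0Rel k n) (Fb k)

section Anticommuting

variable {R : Type*} [Ring R] {x y : R}

theorem pow_mul_of_mul_eq_neg_mul (h : y * x = -(x * y)) (t : ℕ) :
    y ^ t * x = (-1) ^ t * (x * y ^ t) := by
  induction t with
  | zero => simp
  | succ t ih =>
    rw [pow_succ', mul_assoc, ih, ← mul_assoc, ((Commute.neg_one_right y).pow_right t).eq,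
      mul_assoc, ← mul_assoc y, h, pow_succ]
    simp [mul_assoc]

theorem pow_mul_pow_of_mul_eq_neg_mul (h : y * x = -(x * y)) (s t : ℕ) :
    y ^ t * x ^ s = (-1) ^ (t * s) * (x ^ s * y ^ t) := by
  induction s with
  | zero => simp
  | succ s ih =>
    rw [pow_succ, ← mul_assoc, ih, mul_assoc, mul_assoc, pow_mul_of_mul_eq_neg_mul h,
      ← mul_assoc (x ^ s), ← ((Commute.neg_one_left _).pow_left t).eq]
    simp [mul_add, pow_add, mul_assoc]

theorem pow_mul_pow_mul_pow_mul_pow_of_mul_eq_neg_mul (h : y * x = -(x * y)) (s t s' t' : ℕ) :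
    x ^ s * y ^ t * (x ^ s' * y ^ t') = (-1) ^ (t * s') * (x ^ (s + s') * y ^ (t + t')) := by
  rw [mul_assoc, ← mul_assoc (y ^ t), pow_mul_pow_of_mul_eq_neg_mul h, mul_assoc, ← mul_assoc,
    ((Commute.neg_one_right _).pow_right _).eq]
  simp only [pow_add, mul_assoc]

theorem pow_three_eq_zero_of_sq_eq_neg_pow [IsAddTorsionFree R] {m : ℕ} (hm : Odd m)
    (h : y * x = -(x * y)) (hsq : x ^ 2 = -y ^ m) : x ^ 3 = 0 := by
  have hleft : x ^ 3 = -(x * y ^ m) := by rw [pow_succ', hsq, mul_neg]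
  have hright : x ^ 3 = x * y ^ m := by
    rw [pow_succ, hsq, neg_mul, pow_mul_of_mul_eq_neg_mul h, hm.neg_one_pow, neg_one_mul, neg_neg]
  exact self_eq_neg.mp (hleft.trans (by rw [← hright]))

theorem pow_mul_pow_add_of_sq_eq_neg_pow {m : ℕ} (hsq : x ^ 2 = -y ^ m) (s t : ℕ) :
    x ^ s * y ^ (m + t) = -(x ^ (s + 2) * y ^ t) := by
  rw [pow_add, ← neg_eq_iff_eq_neg.mpr hsq, pow_add]
  noncomm_ring

end Anticommuting

theorem Module.Basis.isInternal_span_image_preimage {ι κ R M : Type*} [Ring R] [AddCommGroup M]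
    [Module R M] [DecidableEq κ] (b : Module.Basis ι R M) (f : ι → κ) :
    DirectSum.IsInternal fun j => Submodule.span R (b '' (f ⁻¹' {j})) := by
  refine DirectSum.isInternal_submodule_of_iSupIndep_of_iSup_eq_top (fun j => ?_) ?_
  · refine (b.linearIndependent.disjoint_span_image
      (disjoint_compl_right (a := f ⁻¹' {j}))).mono_right ?_
    refine iSup₂_le fun i hi => Submodule.span_mono (Set.image_mono fun x hx => ?_)
    simp_all
  · rw [eq_top_iff, ← b.span_eq, Submodule.span_le]
    rintro _ ⟨i, rfl⟩
    exact Submodule.mem_iSup_of_mem (f i) (Submodule.subset_span ⟨i, rfl, rfl⟩)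

namespace A0

variable (k) (n : ℕ)

section

omit [CharZero k]

theorem qb_mul_qa : qb k n * qa k n = -(qa k n * qb k n) := by
  have h := RingQuot.mkAlgHom_rel k (A0Rel.anticomm (k := k) (n := n))
  rw [map_add, map_mul, map_mul, map_zero] at h
  exact eq_neg_of_add_eq_zero_right h

theorem qa_sq : qa k n ^ 2 = -qb k n ^ (2 * n + 1) := by
  have h := RingQuot.mkAlgHom_rel k (A0Rel.equation (k := k) (n := n))
  rw [map_add, map_pow, map_pow, map_zero] at h
  exact eq_neg_of_add_eq_zero_left h

theorem adjoin_qa_qb : Algebra.adjoin k {qa k n, qb k n} = ⊤ := by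
  have hrange : Set.range (FreeAlgebra.ι k : Fin 2 → _) = {Fa k, Fb k} := by
    ext; simp [Fin.exists_fin_two, Fa, Fb, eq_comm]
  rw [qa, qb, ← Set.image_pair, Algebra.adjoin_image, ← hrange, FreeAlgebra.adjoin_range_ι,
    Algebra.map_top, AlgHom.range_eq_top]
  exact RingQuot.mkAlgHom_surjective k _

-- Left multiplication by `a` and by `b` on `A₀`, in the basis `e_{s,t} = Finsupp.single (s, t) 1`
-- standing for `a^s b^t`.
def repA : Module.End k (ℕ × ℕ →₀ k) :=
  Finsupp.linearCombination k fun p =>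
    if p.1 < 2 ∧ p.2 ≤ 2 * n then Finsupp.single (p.1 + 1, p.2) 1 else 0

def repB : Module.End k (ℕ × ℕ →₀ k) :=
  Finsupp.linearCombination k fun p =>
    if p.2 < 2 * n then Finsupp.single (p.1, p.2 + 1) ((-1) ^ p.1)
    else if p = (0, 2 * n) then Finsupp.single (2, 0) (-1) else 0

variable {k n}

theorem repA_single (s t : ℕ) (c : k) :
    repA k n (Finsupp.single (s, t) c) =
      if s < 2 ∧ t ≤ 2 * n then Finsupp.single (s + 1, t) c else 0 := by
  rw [repA, Finsupp.linearCombination_single, smul_ite, Finsupp.smul_single_one, smul_zero]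

theorem repB_single (s t : ℕ) (c : k) :
    repB k n (Finsupp.single (s, t) c) =
      if t < 2 * n then Finsupp.single (s, t + 1) ((-1) ^ s * c)
      else if s = 0 ∧ t = 2 * n then Finsupp.single (2, 0) (-c) else 0 := by
  simp only [repB, Finsupp.linearCombination_single, smul_ite, Finsupp.smul_single, smul_zero,
    smul_eq_mul, mul_comm c, neg_one_mul, Prod.mk.injEq]

theorem repA_mul_repB_add : repA k n * repB k n + repB k n * repA k n = 0 := by
  refine Finsupp.lhom_ext fun ⟨s, t⟩ c => ?_
  simp only [LinearMap.add_apply, Module.End.mul_apply, LinearMap.zero_apply, repA_single,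
    repB_single, apply_ite (repA k n), apply_ite (repB k n), map_zero]
  split_ifs <;> simp_all [pow_succ]
  omega

theorem repB_pow_single {s t m : ℕ} (h : t + m ≤ 2 * n) (c : k) :
    (repB k n ^ m) (Finsupp.single (s, t) c) =
      Finsupp.single (s, t + m) ((-1) ^ (s * m) * c) := by
  induction m with
  | zero => simp
  | succ m ih =>
    rw [pow_succ', Module.End.mul_apply, ih (by omega), repB_single, if_pos (by omega),
      ← mul_assoc, ← pow_add]
    ring_nf

theorem repA_sq_single (s t : ℕ) (c : k) :
    (repA k n ^ 2) (Finsupp.single (s, t) c) =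
      if s = 0 ∧ t ≤ 2 * n then Finsupp.single (2, t) c else 0 := by
  rw [sq, Module.End.mul_apply, repA_single]
  split_ifs <;> simp_all [repA_single]

theorem repB_pow_single_of_le {s t : ℕ} (ht : t ≤ 2 * n) (c : k) :
    (repB k n ^ (2 * n + 1)) (Finsupp.single (s, t) c) =
      if s = 0 then Finsupp.single (2, t) (-c) else 0 := by
  obtain ⟨m, hm⟩ := Nat.exists_eq_add_of_le ht
  rw [show 2 * n + 1 = t + 1 + m by omega, pow_add, pow_succ, Module.End.mul_apply,
    Module.End.mul_apply, repB_pow_single (by omega), repB_single, if_neg (by omega)]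
  by_cases hs : s = 0
  · rw [if_pos ⟨hs, hm.symm⟩, if_pos hs, repB_pow_single (by omega), hs]
    simp
  · rw [if_neg (fun h => hs h.1), if_neg hs, map_zero]

theorem repB_pow_single_of_lt {s t : ℕ} (ht : 2 * n < t) (c : k) :
    (repB k n ^ (2 * n + 1)) (Finsupp.single (s, t) c) = 0 := by
  rw [pow_succ, Module.End.mul_apply, repB_single, if_neg (by omega), if_neg (by omega), map_zero]

theorem repA_sq_add_repB_pow : repA k n ^ 2 + repB k n ^ (2 * n + 1) = 0 := by
  refine Finsupp.lhom_ext fun ⟨s, t⟩ c => ?_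
  rw [LinearMap.add_apply, LinearMap.zero_apply, repA_sq_single]
  rcases le_or_gt t (2 * n) with ht | ht
  · rw [repB_pow_single_of_le ht]
    split_ifs <;> simp_all
  · rw [repB_pow_single_of_lt ht, if_neg (by omega), add_zero]

theorem repA_pow_single {s t : ℕ} (hs : s ≤ 2) (ht : t ≤ 2 * n) (c : k) :
    (repA k n ^ s) (Finsupp.single (0, t) c) = Finsupp.single (s, t) c := by
  induction s with
  | zero => rfl
  | succ s ih =>
    rw [pow_succ', Module.End.mul_apply, ih (by omega), repA_single, if_pos ⟨by omega, ht⟩]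

variable (k n)

def rep : A0 k n →ₐ[k] Module.End k (ℕ × ℕ →₀ k) :=
  RingQuot.liftAlgHom k ⟨FreeAlgebra.lift k ![repA k n, repB k n], fun _ _ h => by
    cases h with
    | anticomm => simpa [Fa, Fb] using repA_mul_repB_add
    | equation => simpa [Fa, Fb] using repA_sq_add_repB_pow⟩

theorem rep_qa : rep k n (qa k n) = repA k n := by
  simp [rep, qa, Fa]

theorem rep_qb : rep k n (qb k n) = repB k n := by
  simp [rep, qb, Fb]

def monomial (p : Fin 3 × Fin (2 * n + 1)) : A0 k n := qa k n ^ (p.1 : ℕ) * qb k n ^ (p.2 : ℕ)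

theorem rep_monomial_single (p : Fin 3 × Fin (2 * n + 1)) :
    rep k n (monomial k n p) (Finsupp.single (0, 0) 1) =
      Finsupp.single ((p.1 : ℕ), (p.2 : ℕ)) 1 := by
  have hs := p.1.is_le
  have ht := Nat.le_of_lt_succ p.2.is_lt
  rw [monomial, map_mul, map_pow, map_pow, rep_qa, rep_qb, Module.End.mul_apply,
    repB_pow_single (by omega), zero_mul, pow_zero, zero_add, repA_pow_single hs ht, one_mul]

theorem linearIndependent_monomial : LinearIndependent k (monomial k n) := by
  let ev : A0 k n →ₗ[k] (ℕ × ℕ →₀ k) :=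
    LinearMap.applyₗ (Finsupp.single (0, 0) 1) ∘ₗ (rep k n).toLinearMap
  have hev :
      ev ∘ monomial k n = (fun q => Finsupp.single q (1 : k)) ∘ Prod.map Fin.val Fin.val :=
    funext (rep_monomial_single k n)
  refine LinearIndependent.of_comp ev ?_
  rw [hev]
  exact (Finsupp.linearIndependent_single_one k _).comp _
    (Fin.val_injective.prodMap Fin.val_injective)

def weight (p : Fin 3 × Fin (2 * n + 1)) : ℕ := p.1 * (2 * n + 1) + 2 * p.2

def grade (d : ℕ) : Submodule k (A0 k n) :=
  Submodule.span k (monomial k n '' (weight n ⁻¹' {d}))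

end

theorem qa_pow_three : qa k n ^ 3 = 0 :=
  have : IsAddTorsionFree (A0 k n) := .of_isTorsionFree k _
  pow_three_eq_zero_of_sq_eq_neg_pow (odd_two_mul_add_one n) (qb_mul_qa k n) (qa_sq k n)

theorem qa_pow_mul_qb_pow_mem_grade (s t : ℕ) :
    qa k n ^ s * qb k n ^ t ∈ grade k n (s * (2 * n + 1) + 2 * t) := by
  induction t using Nat.strong_induction_on generalizing s with
  | _ t ih =>
  rcases le_or_gt 3 s with hs | hs
  · rw [← Nat.add_sub_cancel' hs, pow_add, qa_pow_three, zero_mul, zero_mul]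
    exact zero_mem _
  rcases le_or_gt t (2 * n) with ht | ht
  · exact Submodule.subset_span ⟨(⟨s, hs⟩, ⟨t, by omega⟩), rfl, rfl⟩
  obtain ⟨u, rfl⟩ : ∃ u, t = 2 * n + 1 + u := ⟨t - (2 * n + 1), by omega⟩
  rw [pow_mul_pow_add_of_sq_eq_neg_pow (qa_sq k n)]
  convert neg_mem (ih u (by omega) (s + 2)) using 2
  ring

theorem monomial_mul_monomial_mem_grade (p q : Fin 3 × Fin (2 * n + 1)) :
    monomial k n p * monomial k n q ∈ grade k n (weight n p + weight n q) := by
  rw [monomial, monomial, pow_mul_pow_mul_pow_mul_pow_of_mul_eq_neg_mul (qb_mul_qa k n)]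
  have hmem := qa_pow_mul_qb_pow_mem_grade k n (p.1 + q.1) (p.2 + q.2)
  rw [show (p.1 + q.1 : ℕ) * (2 * n + 1) + 2 * (p.2 + q.2 : ℕ) = weight n p + weight n q by
    simp only [weight]; ring] at hmem
  rcases neg_one_pow_eq_or (A0 k n) (p.2 * q.1 : ℕ) with h | h <;> rw [h]
  · rwa [one_mul]
  · rw [neg_one_mul]
    exact neg_mem hmem

instance : SetLike.GradedMonoid (grade k n) where
  one_mem := by simpa using qa_pow_mul_qb_pow_mem_grade k n 0 0
  mul_mem i j x y hx hy := by
    have hle : grade k n i * grade k n j ≤ grade k n (i + j) := by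
      rw [grade, grade, Submodule.span_mul_span, Submodule.span_le]
      rintro _ ⟨_, ⟨p, rfl, rfl⟩, _, ⟨q, rfl, rfl⟩, rfl⟩
      exact monomial_mul_monomial_mem_grade k n p q
    exact hle (Submodule.mul_mem_mul hx hy)

theorem span_monomial_eq_top : Submodule.span k (Set.range (monomial k n)) = ⊤ := by
  set S := Submodule.span k (Set.range (monomial k n))
  have hgrade (d : ℕ) : grade k n d ≤ S := Submodule.span_mono (Set.image_subset_range _ _)
  have hmul : S * S ≤ S := by
    rw [Submodule.span_mul_span, Submodule.span_le]
    rintro _ ⟨_, ⟨p, rfl⟩, _, ⟨q, rfl⟩, rfl⟩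
    exact hgrade _ (monomial_mul_monomial_mem_grade k n p q)
  have hqa : qa k n ∈ S := hgrade _ (by simpa using qa_pow_mul_qb_pow_mem_grade k n 1 0)
  have hqb : qb k n ∈ S := hgrade _ (by simpa using qa_pow_mul_qb_pow_mem_grade k n 0 1)
  have hadjoin := Algebra.adjoin_le (S := S.toSubalgebra (hgrade 0 SetLike.GradedOne.one_mem)
    fun _ _ hx hy => hmul (Submodule.mul_mem_mul hx hy)) (Set.pair_subset hqa hqb)
  rw [adjoin_qa_qb, top_le_iff] at hadjoin
  exact Algebra.toSubmodule_eq_top.mpr hadjoin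

def basisMonomial : Module.Basis (Fin 3 × Fin (2 * n + 1)) k (A0 k n) :=
  .mk (linearIndependent_monomial k n) (span_monomial_eq_top k n).ge

theorem isInternal_grade : DirectSum.IsInternal (grade k n) := by
  have h := (basisMonomial k n).isInternal_span_image_preimage (weight n)
  rwa [basisMonomial, Module.Basis.coe_mk] at h

instance : GradedAlgebra (grade k n) where
  toDecomposition := (isInternal_grade k n).chooseDecomposition

end A0

theorem A0_graded_basis_general (n : ℕ) :
    (∃ 𝒜 : ℕ → Submodule k (A0 k n), Nonempty (GradedAlgebra 𝒜) ∧
      qa k n ∈ 𝒜 (2*n+1) ∧ qb k n ∈ 𝒜 2) ∧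
    (LinearIndependent k
      (fun p : Fin 3 × Fin (2*n+1) => qa k n ^ (p.1 : ℕ) * qb k n ^ (p.2 : ℕ))) ∧
    (Submodule.span k
      (Set.range (fun p : Fin 3 × Fin (2*n+1) =>
        qa k n ^ (p.1 : ℕ) * qb k n ^ (p.2 : ℕ))) = ⊤) ∧
    Module.finrank k (A0 k n) = 6*n+3 := by
  refine ⟨⟨A0.grade k n, ⟨inferInstance⟩, ?_, ?_⟩, A0.linearIndependent_monomial k n,
    A0.span_monomial_eq_top k n, ?_⟩
  · simpa using A0.qa_pow_mul_qb_pow_mem_grade k n 1 0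
  · simpa using A0.qa_pow_mul_qb_pow_mem_grade k n 0 1
  · rw [Module.finrank_eq_card_basis (A0.basisMonomial k n)]
    simp only [Fintype.card_prod, Fintype.card_fin]
    ring

/-- A₀ is graded with wt(a) = 2n+1, wt(b) = 2, and the 6n+3 monomials a^s b^t,
0 ≤ s ≤ 2, 0 ≤ t ≤ 2n, form a k-basis of A₀; in particular dim_k A₀ = 6n+3. -/
theorem A0_graded_basis (n : ℕ) (hn : 1 ≤ n) :
    (∃ 𝒜 : ℕ → Submodule k (A0 k n), Nonempty (GradedAlgebra 𝒜) ∧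
      qa k n ∈ 𝒜 (2*n+1) ∧ qb k n ∈ 𝒜 2) ∧
    (LinearIndependent k
      (fun p : Fin 3 × Fin (2*n+1) => qa k n ^ (p.1 : ℕ) * qb k n ^ (p.2 : ℕ))) ∧
    (Submodule.span k
      (Set.range (fun p : Fin 3 × Fin (2*n+1) =>
        qa k n ^ (p.1 : ℕ) * qb k n ^ (p.2 : ℕ))) = ⊤) ∧
    Module.finrank k (A0 k n) = 6*n+3 :=
  A0_graded_basis_general n

end
end

section
/- In an associative algebra over a field, suppose elements b, c, d satisfy: b² is central, c² is central, d² is central, and b + c + d = (t/2)·1 where t is a central element. Then t·(bc - cb) = 0. -/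
/-!
Write `s = t/2`, so that `d = s - b - c`. Expanding,
`d² = s² + (b² + c² + (bc + cb)) - 2s(b + c)`. Every term except the last commutes with `b`
(for `bc + cb` this is the centrality of `b²`), hence so does `2s(b + c)`, and
`[b, 2s(b + c)] = 2s[b, c] = t[b, c]`.
-/

section

variable {A : Type*} [Ring A]

theorem Commute.mul_add_mul_of_commute_sq {b c : A} (h : Commute c (b ^ 2)) :
    Commute b (b * c + c * b) := by
  show b * (b * c + c * b) = (b * c + c * b) * b
  linear_combination (norm := noncomm_ring) -h.eq

theorem two_mul_mul_commutator_eq_zero {s b c : A} (hsb : Commute s b) (hsc : Commute s c)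
    (hb : Commute c (b ^ 2)) (hc : Commute b (c ^ 2)) (hd : Commute b ((s - b - c) ^ 2)) :
    2 * s * (b * c - c * b) = 0 := by
  have hexp : (s - b - c) ^ 2 = s ^ 2 + (b ^ 2 + c ^ 2 + (b * c + c * b) - 2 * s * (b + c)) := by
    rw [sub_sub, (hsb.add_right hsc).sub_sq]
    noncomm_ring
  have hquad : Commute b (b ^ 2 + c ^ 2 + (b * c + c * b)) :=
    ((Commute.self_pow b 2).add_right hc).add_right hb.mul_add_mul_of_commute_sq
  have hlin : Commute b (2 * s * (b + c)) := by
    rw [hexp] at hd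
    have := hquad.sub_right (hd.sub_right (hsb.symm.pow_right 2))
    rwa [add_sub_cancel_left, sub_sub_cancel] at this
  linear_combination (norm := noncomm_ring) hlin.eq + 2 * hsb.eq * (b + c)

end

/-- In an associative algebra over a field of characteristic ≠ 2, if b², c², d² are
central, t is central (a scalar), and b + c + d = (t/2)·1, then t·(bc - cb) = 0. -/
theorem central_squares_rel {k : Type*} [Field k] (hchar : (2 : k) ≠ 0)
    {A : Type*} [Ring A] [Algebra k A] (b c d : A) (t : k)
    (hb : ∀ x : A, x * b^2 = b^2 * x)
    (hc : ∀ x : A, x * c^2 = c^2 * x)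
    (hd : ∀ x : A, x * d^2 = d^2 * x)
    (hsum : b + c + d = algebraMap k A (t/2)) :
    algebraMap k A t * (b*c - c*b) = 0 := by
  set s := algebraMap k A (t / 2)
  have hds : d = s - b - c := by rw [← hsum]; abel
  have hts : algebraMap k A t = 2 * s := by
    rw [← map_ofNat (algebraMap k A) 2, ← map_mul, mul_div_cancel₀ _ hchar]
  rw [hts]
  exact two_mul_mul_commutator_eq_zero (Algebra.commutes _ b) (Algebra.commutes _ c)
    (hb c) (hc b) (hds ▸ hd b)
end
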